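/- In the depth-first search lattice, if a node's remaining necessary set is empty then the set of edge-label items accumulated along the path from the root covers nec'(a); consequently the corresponding itemset X yields a dependency X→a that holds over H. -/
import Mathlib

/-- Every member of a finite family contains an inclusion-minimal member. -/
lemma exists_minimal_mem {ι : Type*} [DecidableEq ι] (nec : Finset (Finset ι)) :
    ∀ D ∈ nec, ∃ D' ∈ nec, D' ⊆ D ∧ ¬ ∃ D'' ∈ nec, D'' ⊂ D' := by
  intro D hD
  induction D using Finset.strongInduction with
  | _ D ih =>
    by_cases h : ∃ D'' ∈ nec, D'' ⊂ D
    · obtain ⟨D'', hD'', hsub⟩ := h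
      obtain ⟨E, hE, hEsub, hEmin⟩ := ih D'' hsub hD''
      exact ⟨E, hE, hEsub.trans hsub.subset, hEmin⟩
    · exact ⟨D, hD, subset_rfl, h⟩

/-- DFS lattice leaf soundness: if the remaining necessary set at a node is
empty, then the accumulated itemset X covers nec'(a), and consequently
X→a holds over H. -/
theorem dfs_leaf_sound {ι μ : Type*} [DecidableEq ι]
    (I : Finset ι) (H : Finset μ) (sat : μ → ι → Prop)
    [∀ h b, Decidable (sat h b)]
    (a : ι) (haI : a ∈ I) (X : Finset ι) (hX : X ⊆ I) (haX : a ∉ X)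
    -- nec(a)
    (nec : Finset (Finset ι))
    (hnec : nec = (H.filter (fun h => a ∈ I.filter (fun b => ¬ sat h b))).image
        (fun h => (I.filter (fun b => ¬ sat h b)).erase a))
    -- nec'(a): the inclusion-minimal members of nec(a)
    (nec' : Finset (Finset ι))
    (hnec' : nec' = nec.filter (fun D => ¬ ∃ D' ∈ nec, D' ⊂ D))
    -- the remaining uncovered family at the node is empty
    (hR : nec'.filter (fun S => X ∩ S = ∅) = ∅) :
    (∀ S ∈ nec', (X ∩ S).Nonempty) ∧
    (∀ h ∈ H, (∀ b ∈ X, sat h b) → sat h a) := by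
  have hcov : ∀ S ∈ nec', (X ∩ S).Nonempty := by
    intro S hS
    rw [Finset.nonempty_iff_ne_empty]
    intro hemp
    have : S ∈ nec'.filter (fun S => X ∩ S = ∅) := Finset.mem_filter.2 ⟨hS, hemp⟩
    rw [hR] at this
    exact absurd this (Finset.notMem_empty S)
  refine ⟨hcov, ?_⟩
  intro h hh hsat
  by_contra hna
  have haD : a ∈ I.filter (fun b => ¬ sat h b) := Finset.mem_filter.2 ⟨haI, hna⟩
  have hDnec : (I.filter (fun b => ¬ sat h b)).erase a ∈ nec := by
    rw [hnec]
    exact Finset.mem_image.2 ⟨h, Finset.mem_filter.2 ⟨hh, haD⟩, rfl⟩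
  obtain ⟨D', hD', hsub, hmin⟩ := exists_minimal_mem nec _ hDnec
  have hD'nec' : D' ∈ nec' := by
    rw [hnec']; exact Finset.mem_filter.2 ⟨hD', hmin⟩
  obtain ⟨b, hb⟩ := hcov D' hD'nec'
  rw [Finset.mem_inter] at hb
  have hbD := hsub hb.2
  rw [Finset.mem_erase, Finset.mem_filter] at hbD
  exact hbD.2.2 (hsat b hb.1)
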